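/- arXiv:1607.08835 — 7 statements merged into one kernel-verified Lean document; each statement's English description precedes it below -/
import Mathlib

section
/- Let R be a commutative ring, A a commutative R-algebra, M an A-module, and a ∈ A. Suppose that the R-module M/aM is flat and that multiplication by a is injective on M. Then for every integer n ≥ 1, the R-module M/aⁿM is flat. -/
/-! Multiplication by `aⁿ` induces a short exact sequence
`0 → M/aM → M/aⁿ⁺¹M → M/aⁿM → 0`, injective on the left because `a` is `M`-regular.
Flatness is closed under extensions (tensor with an ideal `I ⊆ R` and chase the diagram
against `I → R`), so induction on `n` gives the claim. -/

open Pointwise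

open LinearMap TensorProduct in
theorem Module.Flat.of_exact {R K N Q : Type*} [CommRing R] [AddCommGroup K] [AddCommGroup N]
    [AddCommGroup Q] [Module R K] [Module R N] [Module R Q] [Module.Flat R K] [Module.Flat R Q]
    {i : K →ₗ[R] N} {p : N →ₗ[R] Q} (hi : Function.Injective i) (hp : Function.Surjective p)
    (h : Function.Exact i p) : Module.Flat R N := by
  refine Module.Flat.iff_lTensor_injective'.mpr fun I ↦ (injective_iff_map_eq_zero _).mpr ?_
  intro x hx
  have hpx : rTensor I p x = 0 := by
    refine Module.Flat.lTensor_preserves_injective_linearMap (M := Q) _ I.injective_subtype ?_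
    rw [← LinearMap.comp_apply, lTensor_comp_rTensor, ← rTensor_comp_lTensor,
      LinearMap.comp_apply, hx, map_zero, map_zero]
  obtain ⟨y, rfl⟩ := (_root_.rTensor_exact I h hp x).mp hpx
  suffices y = 0 by rw [this, map_zero]
  refine Module.Flat.lTensor_preserves_injective_linearMap (M := K) _ I.injective_subtype ?_
  refine Module.Flat.rTensor_preserves_injective_linearMap (M := R) i hi ?_
  rw [← LinearMap.comp_apply, rTensor_comp_lTensor, ← lTensor_comp_rTensor,
    LinearMap.comp_apply, hx, map_zero, map_zero]

lemma Submodule.mem_pointwise_smul_top_iff {A M : Type*} [CommRing A] [AddCommGroup M]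
    [Module A M] {a : A} {m : M} : m ∈ a • (⊤ : Submodule A M) ↔ ∃ m', a • m' = m := by
  simp [Submodule.mem_smul_pointwise_iff_exists]

namespace QuotSMulTop

variable {A M : Type*} [CommRing A] [AddCommGroup M] [Module A M]

lemma mul_smul_top_le (b a : A) : (b * a) • (⊤ : Submodule A M) ≤ b • ⊤ := by
  rw [mul_smul]
  exact smul_le_smul_left b le_top

def smulLeft (b a : A) : QuotSMulTop a M →ₗ[A] QuotSMulTop (b * a) M :=
  Submodule.mapQ _ _ (LinearMap.lsmul A M b) <| by
    rw [mul_smul]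
    exact fun x hx ↦ Submodule.smul_mem_pointwise_smul x b _ hx

lemma smulLeft_injective {b : A} (hb : IsSMulRegular M b) (a : A) :
    Function.Injective (smulLeft (M := M) b a) := by
  refine (injective_iff_map_eq_zero _).mpr fun x hx ↦ ?_
  obtain ⟨m, rfl⟩ := Submodule.Quotient.mk_surjective _ x
  obtain ⟨m', hm'⟩ :=
    Submodule.mem_pointwise_smul_top_iff.mp ((Submodule.Quotient.mk_eq_zero _).mp hx)
  rw [mul_smul] at hm'
  exact (Submodule.Quotient.mk_eq_zero _).mpr
    (Submodule.mem_pointwise_smul_top_iff.mpr ⟨m', hb hm'⟩)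

lemma exact_smulLeft_factor (b a : A) :
    Function.Exact (smulLeft (M := M) b a) (Submodule.factor (mul_smul_top_le b a)) := by
  refine fun x ↦ ⟨fun hx ↦ ?_, ?_⟩
  · obtain ⟨m, rfl⟩ := Submodule.Quotient.mk_surjective _ x
    obtain ⟨m', rfl⟩ :=
      Submodule.mem_pointwise_smul_top_iff.mp ((Submodule.Quotient.mk_eq_zero _).mp hx)
    exact ⟨Submodule.Quotient.mk m', rfl⟩
  · rintro ⟨y, rfl⟩
    obtain ⟨m, rfl⟩ := Submodule.Quotient.mk_surjective _ y
    exact (Submodule.Quotient.mk_eq_zero _).mpr (Submodule.smul_mem_pointwise_smul m b ⊤ trivial)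

theorem flat_mul {R : Type*} [CommRing R] [Algebra R A] [Module R M] [IsScalarTower R A M]
    {b : A} (hb : IsSMulRegular M b) (a : A) [Module.Flat R (QuotSMulTop a M)]
    [Module.Flat R (QuotSMulTop b M)] : Module.Flat R (QuotSMulTop (b * a) M) :=
  Module.Flat.of_exact (i := (smulLeft b a).restrictScalars R)
    (p := (Submodule.factor (mul_smul_top_le b a)).restrictScalars R)
    (smulLeft_injective hb a) (Submodule.factor_surjective (mul_smul_top_le b a))
    (exact_smulLeft_factor b a)

end QuotSMulTop

/-- **Step 1 of the flatness lemma.**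
Let `R` be a commutative ring, `A` a commutative `R`-algebra, `M` an `A`-module and `a ∈ A`.
If `M/aM` is flat over `R` and multiplication by `a` is injective on `M`, then for every
`n ≥ 1` the `R`-module `M/aⁿM` is flat. -/
theorem flat_quotient_pow_smul_of_flat_quotient_smul
    {R A : Type*} [CommRing R] [CommRing A] [Algebra R A]
    {M : Type*} [AddCommGroup M] [Module R M] [Module A M] [IsScalarTower R A M]
    (a : A)
    (hflat : Module.Flat R (M ⧸ (a • (⊤ : Submodule A M))))
    (hinj : Function.Injective (fun m : M => a • m))
    (n : ℕ) (hn : 1 ≤ n) :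
    Module.Flat R (M ⧸ ((a ^ n) • (⊤ : Submodule A M))) := by
  induction n, hn using Nat.le_induction with
  | base => rwa [pow_one]
  | succ n _ ih =>
    rw [pow_succ]
    exact QuotSMulTop.flat_mul (IsSMulRegular.pow n hinj) a
end

section
/- Let B be a commutative ring, n a natural number, and b₁, …, bₙ ∈ B. Let M be the quotient of the free B-module Bⁿ with standard basis e₁, …, eₙ by the submodule generated by the elements bᵢ·eⱼ − bⱼ·eᵢ for all 1 ≤ i, j ≤ n. Let L be a faithful B-module (i.e., if r ∈ B satisfies r·x = 0 for all x ∈ L, then r = 0), and let ψ : M → L be a surjective B-linear map. Then: (i) for every c = (c₁, …, cₙ) ∈ Bⁿ whose class in M lies in the kernel of ψ, one has Σᵢ bᵢcᵢ = 0; and (ii) every element of the kernel of ψ is annihilated by each bⱼ, i.e., bⱼ·x = 0 in M for every x ∈ ker ψ and every j. -/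
lemma key_mem {B : Type*} [CommRing B] {n : ℕ} (b : Fin n → B)
    (K : Submodule B (Fin n → B))
    (hK : K = Submodule.span B
      {x : Fin n → B | ∃ i j : Fin n,
        x = b i • (Pi.single j 1 : Fin n → B) - b j • (Pi.single i 1 : Fin n → B)})
    (c d : Fin n → B) :
    (∑ i, b i * c i) • d - (∑ i, b i * d i) • c ∈ K := by
  have heq : (∑ i, b i * c i) • d - (∑ i, b i * d i) • c
      = ∑ i, ∑ j, (c i * d j) •
        (b i • (Pi.single j 1 : Fin n → B) - b j • (Pi.single i 1 : Fin n → B)) := by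
    funext k
    simp only [Finset.sum_apply, Pi.smul_apply, Pi.sub_apply, smul_eq_mul, Pi.single_apply,
      mul_sub, mul_ite, mul_one, mul_zero, Finset.sum_sub_distrib]
    rw [Finset.sum_comm (f := fun i j => if k = i then c i * d j * b j else 0)]
    simp only [Finset.sum_ite_eq, Finset.mem_univ, if_true]
    rw [Finset.sum_mul, Finset.sum_mul]
    congr 1 <;> apply Finset.sum_congr rfl <;> intros <;> ring
  rw [heq, hK]
  refine Submodule.sum_mem _ fun i _ => Submodule.sum_mem _ fun j _ =>
    Submodule.smul_mem _ _ (Submodule.subset_span ⟨i, j, rfl⟩)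

/-- **Algebraic core of lem:support of kernel.**
Let `B` be a commutative ring, `b₁, …, bₙ ∈ B`, and let `M` be the quotient of `Bⁿ` by the
submodule generated by the elements `bᵢ·eⱼ − bⱼ·eᵢ`.  If `L` is a faithful `B`-module and
`ψ : M → L` is a surjective `B`-linear map, then (i) any `c ∈ Bⁿ` whose class lies in
`ker ψ` satisfies `Σᵢ bᵢcᵢ = 0`, and (ii) every element of `ker ψ` is killed by each `bⱼ`. -/
theorem kernel_of_surjection_to_faithful_module
    {B : Type*} [CommRing B] {n : ℕ} (b : Fin n → B)
    (K : Submodule B (Fin n → B))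
    (hK : K = Submodule.span B
      {x : Fin n → B | ∃ i j : Fin n,
        x = b i • (Pi.single j 1 : Fin n → B) - b j • (Pi.single i 1 : Fin n → B)})
    (L : Type*) [AddCommGroup L] [Module B L]
    (hL : ∀ r : B, (∀ x : L, r • x = 0) → r = 0)
    (ψ : ((Fin n → B) ⧸ K) →ₗ[B] L) (hψ : Function.Surjective ψ) :
    (∀ c : Fin n → B, ψ (Submodule.Quotient.mk c) = 0 → ∑ i, b i * c i = 0) ∧
    (∀ x : (Fin n → B) ⧸ K, ψ x = 0 → ∀ j : Fin n, b j • x = 0) := by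
  have part1 : ∀ c : Fin n → B, ψ (Submodule.Quotient.mk c) = 0 → ∑ i, b i * c i = 0 := by
    intro c hc
    apply hL
    intro y
    obtain ⟨z, rfl⟩ := hψ y
    obtain ⟨d, rfl⟩ := Submodule.Quotient.mk_surjective K z
    have hq : (Submodule.Quotient.mk ((∑ i, b i * c i) • d) : (Fin n → B) ⧸ K)
        = Submodule.Quotient.mk ((∑ i, b i * d i) • c) :=
      (Submodule.Quotient.eq K).mpr (key_mem b K hK c d)
    calc (∑ i, b i * c i) • ψ (Submodule.Quotient.mk d)
        = ψ (Submodule.Quotient.mk ((∑ i, b i * c i) • d)) := by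
          rw [← map_smul]; rfl
      _ = ψ (Submodule.Quotient.mk ((∑ i, b i * d i) • c)) := by rw [hq]
      _ = (∑ i, b i * d i) • ψ (Submodule.Quotient.mk c) := by
          rw [← map_smul]; rfl
      _ = 0 := by rw [hc, smul_zero]
  refine ⟨part1, ?_⟩
  intro x hx j
  obtain ⟨c, rfl⟩ := Submodule.Quotient.mk_surjective K x
  have hσ : ∑ i, b i * c i = 0 := part1 c hx
  have hsingle : (∑ i, b i * (Pi.single j 1 : Fin n → B) i) = b j := by
    simp [Pi.single_apply, mul_ite]
  have := key_mem b K hK (Pi.single j 1) c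
  rw [hsingle, hσ, zero_smul, sub_zero] at this
  have : (Submodule.Quotient.mk (b j • c) : (Fin n → B) ⧸ K) = 0 :=
    (Submodule.Quotient.mk_eq_zero K).mpr this
  rw [← this]; rfl
end

section
/- Let R be a commutative ring and a ∈ R. In the formal power series ring R[[x, y]], the contraction to R of the ideal generated by x and x·y − a equals the principal ideal generated by a; equivalently, the kernel of the composite ring homomorphism R → R[[x, y]] → R[[x, y]]/(x, x·y − a) is exactly (a). -/
namespace Ideal

variable {R S : Type*} [CommRing R] [CommRing S]

theorem comap_le_map_of_leftInverse {f : R →+* S} {g : S →+* R}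
    (hgf : Function.LeftInverse g f) (I : Ideal S) : I.comap f ≤ I.map g :=
  fun r hr => hgf r ▸ mem_map_of_mem g hr

/-- The retraction `g` bounds the contraction from above, and `f a = x * y - (x * y - f a)`
bounds it from below. -/
theorem comap_span_pair_mul_sub_eq_span_singleton {f : R →+* S} {g : S →+* R}
    (hgf : Function.LeftInverse g f) {x : S} (hx : g x = 0) (y : S) (a : R) :
    (span {x, x * y - f a}).comap f = span {a} := by
  apply le_antisymm
  · refine (comap_le_map_of_leftInverse hgf _).trans ?_
    rw [map_span, Set.image_pair, span_le, Set.insert_subset_iff, Set.singleton_subset_iff,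
      map_sub, map_mul, hx, hgf a, zero_mul, zero_sub]
    exact ⟨zero_mem _, neg_mem (mem_span_singleton_self a)⟩
  · rw [span_singleton_le_iff_mem, mem_comap]
    have hxy : x * y ∈ span {x, x * y - f a} :=
      mul_mem_right y _ (subset_span (Set.mem_insert x _))
    simpa using sub_mem hxy (subset_span (Set.mem_insert_of_mem x rfl))

end Ideal

/-- **Case 2 of lem:ES_implies_1aligned.**
Let `R` be a commutative ring and `a ∈ R`.  The contraction to `R` of the ideal
`(x, x·y − a)` of `R[[x, y]]` is exactly the principal ideal `(a)`. -/
theorem comap_span_X_XY_sub_C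
    {R : Type*} [CommRing R] (a : R) :
    Ideal.comap (MvPowerSeries.C (σ := Fin 2) (R := R))
      (Ideal.span {(MvPowerSeries.X 0 : MvPowerSeries (Fin 2) R),
        MvPowerSeries.X 0 * MvPowerSeries.X 1 - MvPowerSeries.C (σ := Fin 2) (R := R) a})
      = Ideal.span {a} :=
  Ideal.comap_span_pair_mul_sub_eq_span_singleton (g := MvPowerSeries.constantCoeff)
    (fun r => MvPowerSeries.constantCoeff_C r) (MvPowerSeries.constantCoeff_X 0) _ a
end

section
/- Let C be a category with pullbacks and K a Grothendieck pretopology on C. Let B be a full subcategory of C which is a base for (C, K), i.e., every object of C admits a K-covering family all of whose sources lie in B. For each object A of B, let K|_B(A) be the set of K-covering families of A all of whose sources lie in B. Then K|_B is a coverage on B: for every family {fᵢ : Aᵢ → A} in K|_B(A) and every morphism g : A′ → A in B, there exists a family {f′ⱼ : A′ⱼ → A′} in K|_B(A′) such that each composite g ∘ f′ⱼ : A′ⱼ → A factors through some fᵢ. -/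
open CategoryTheory Limits

/-- **Part (1) of the Comparison Lemma.**
Let `C` be a category with pullbacks, `K` a Grothendieck pretopology on `C`, and `P` a
predicate on objects of `C` singling out a full subcategory `B` which is a base for `(C, K)`
(every object admits a `K`-cover by objects satisfying `P`).  Then the restriction `K|_B` is
a coverage on `B`: for every `K`-covering family of an object `A` of `B` with all sources in
`B`, and every morphism `g : A′ ⟶ A` with `A′` in `B`, there is a `K`-covering family of `A′`
with all sources in `B` such that each composite to `A` factors through some member of the
original family. -/
theorem restricted_pretopology_is_coverage
    {C : Type*} [Category C] [HasPullbacks C]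
    (K : Pretopology C) (P : C → Prop)
    (hbase : ∀ X : C, ∃ S ∈ K.coverings X, ∀ ⦃Y : C⦄ ⦃f : Y ⟶ X⦄, S f → P Y) :
    ∀ (A : C), P A → ∀ S ∈ K.coverings A, (∀ ⦃Y : C⦄ ⦃f : Y ⟶ A⦄, S f → P Y) →
      ∀ (A' : C), P A' → ∀ g : A' ⟶ A,
        ∃ T ∈ K.coverings A', (∀ ⦃Y : C⦄ ⦃f : Y ⟶ A'⦄, T f → P Y) ∧
          ∀ ⦃Y : C⦄ ⦃f : Y ⟶ A'⦄, T f →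
            ∃ (Z : C) (e : Z ⟶ A) (h : Y ⟶ Z), S e ∧ h ≫ e = f ≫ g := by
  intro A _hA S hS _hSP A' _hA' g
  -- pull back S along g
  have hpb : Presieve.pullbackArrows g S ∈ K.coverings A' := K.pullbacks g S hS
  -- choose a base cover of each source of the pulled-back family
  choose R hR hRP using fun Y : C => hbase Y
  refine ⟨(Presieve.pullbackArrows g S).bind (fun Y f _ => R Y), ?_, ?_, ?_⟩
  · exact K.transitive _ _ hpb (fun Y f _ => hR Y)
  · rintro Y f ⟨W, h, f', _, hRh, rfl⟩
    exact hRP W hRh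
  · rintro Y f ⟨W, h, f', hf', hRh, rfl⟩
    obtain ⟨Z, e, he⟩ := hf'
    exact ⟨Z, e, h ≫ pullback.fst e g, he, by simp [pullback.condition]⟩
end

section
/- Let C be a category with pullbacks, K a Grothendieck pretopology on C, and B a full subcategory of C which is a base for (C, K); let K|_B be the induced coverage on B. Let F be a presheaf of sets on B. Then F is a sheaf on (B, K|_B) if and only if for every covering family {Aᵢ → A}_{i ∈ I} in K|_B and for every choice, for each pair (i, j) ∈ I × I, of a K-covering family {A_{ijk} → Aᵢ ×_A Aⱼ}_{k ∈ I_{ij}} of the fibred product Aᵢ ×_A Aⱼ (taken in C) by objects of B, the diagram F(A) → Π_{i ∈ I} F(Aᵢ) ⇉ Π_{i,j ∈ I, k ∈ I_{ij}} F(A_{ijk}) is an equalizer of sets. -/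
open CategoryTheory Limits Opposite

universe w v u

/-- A morphism of `C` between objects satisfying `P`, regarded as a morphism of the full
subcategory of `C` determined by `P`. -/
def FullSubcategory.homOf {C : Type u} [Category.{v} C] {P : C → Prop} {X Y : C}
    (hX : P X) (hY : P Y) (f : X ⟶ Y) :
    (⟨X, hX⟩ : CategoryTheory.ObjectProperty.FullSubcategory P) ⟶ ⟨Y, hY⟩ := ObjectProperty.homMk f

/-!
Compatibility on all commutative squares in `B` trivially gives compatibility on the chosen
covers `{A_{ijk}}` of the pullbacks. Conversely, a square `W → Aᵢ, W → Aⱼ` with `W ∈ B`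
factors through `Aᵢ ×_A Aⱼ`, so it pulls `{A_{ijk}}` back to a `K`-cover of `W`, which can be
refined by objects of `B` because `B` is a base. On each member of the refinement the two
restrictions agree, since it maps through some `A_{ijk}`; and a sheaf on `B` is separated for
`K`-covers by objects of `B`.
-/

namespace CategoryTheory.Pretopology

variable {C : Type u} [Category.{v} C] [HasPullbacks C] {K : Pretopology C} {P : C → Prop}

lemma exists_ofArrows_mem_coverings_of_base (X : C)
    (hbase : ∀ X : C, ∃ S ∈ K.coverings X, ∀ ⦃Y : C⦄ ⦃f : Y ⟶ X⦄, S f → P Y) :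
    ∃ (κ : Type (max u v)) (Z : κ → C) (g : ∀ k, Z k ⟶ X),
      Presieve.ofArrows Z g ∈ K.coverings X ∧ ∀ k, P (Z k) := by
  obtain ⟨S, hS, hSP⟩ := hbase X
  obtain ⟨κ, Z, g, rfl⟩ := S.exists_eq_ofArrows
  exact ⟨κ, Z, g, hS, fun k => hSP (Presieve.ofArrows.mk k)⟩

/-- The coverage axiom for `K|_B`, in the strong form that the refining cover consists of
objects of the base `B`. -/
lemma exists_mem_coverings_of_base_factoring
    (hbase : ∀ X : C, ∃ S ∈ K.coverings X, ∀ ⦃Y : C⦄ ⦃f : Y ⟶ X⦄, S f → P Y)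
    {Y W : C} (h : W ⟶ Y) {S : Presieve Y} (hS : S ∈ K.coverings Y) :
    ∃ R ∈ K.coverings W, ∀ ⦃V : C⦄ ⦃e : V ⟶ W⦄, R e →
      P V ∧ ∃ (Z : C) (s : Z ⟶ Y) (t : V ⟶ Z), S s ∧ t ≫ s = e ≫ h := by
  choose T hT hTP using hbase
  refine ⟨(Presieve.pullbackArrows h S).bind fun V _ _ => T V,
    K.transitive _ _ (K.pullbacks h S hS) fun V _ _ => hT V, ?_⟩
  rintro V _ ⟨-, t, -, ⟨Z, s, hs⟩, ht, rfl⟩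
  exact ⟨hTP _ ht, Z, s, t ≫ pullback.fst s h, hs, by simp [pullback.condition]⟩

end CategoryTheory.Pretopology

namespace FullSubcategory

variable {C : Type u} [Category.{v} C] {P : C → Prop}
  (F : (ObjectProperty.FullSubcategory P)ᵒᵖ ⥤ Type w)

lemma map_homOf_comp {X Y Z : C} (hX : P X) (hY : P Y) (hZ : P Z) (u : X ⟶ Y) (v : Y ⟶ Z)
    (s : F.obj (op ⟨Z, hZ⟩)) :
    F.map (homOf hX hZ (u ≫ v)).op s = F.map (homOf hX hY u).op (F.map (homOf hY hZ v).op s) :=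
  F.map_comp_apply (homOf hY hZ v).op (homOf hX hY u).op s

def IsSquareCompatible {ι : Type*} {A : C} {X : ι → C} (hX : ∀ i, P (X i))
    (f : ∀ i, X i ⟶ A) (x : ∀ i, F.obj (op ⟨X i, hX i⟩)) : Prop :=
  ∀ (i j : ι) (W : C) (hW : P W) (g₁ : W ⟶ X i) (g₂ : W ⟶ X j),
    g₁ ≫ f i = g₂ ≫ f j →
      F.map (homOf hW (hX i) g₁).op (x i) = F.map (homOf hW (hX j) g₂).op (x j)

variable [HasPullbacks C]

/-- The sheaf condition for `F` on the site `(B, K|_B)`. -/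
def IsSheafOnBase (K : Pretopology C) : Prop :=
  ∀ (ι : Type (max u v)) (A : C) (hA : P A) (X : ι → C) (hX : ∀ i, P (X i))
    (f : ∀ i, X i ⟶ A), Presieve.ofArrows X f ∈ K.coverings A →
  ∀ x : ∀ i, F.obj (op ⟨X i, hX i⟩), IsSquareCompatible F hX f x →
    ∃! s : F.obj (op ⟨A, hA⟩), ∀ i, F.map (homOf (hX i) hA (f i)).op s = x i

variable {F} {K : Pretopology C}

lemma IsSheafOnBase.ext (hF : IsSheafOnBase F K) {A : C} (hA : P A) {S : Presieve A}
    (hS : S ∈ K.coverings A) (hSP : ∀ ⦃Y : C⦄ ⦃e : Y ⟶ A⦄, S e → P Y)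
    {a b : F.obj (op ⟨A, hA⟩)}
    (hab : ∀ (Y : C) (hY : P Y) (e : Y ⟶ A), S e →
      F.map (homOf hY hA e).op a = F.map (homOf hY hA e).op b) :
    a = b := by
  obtain ⟨ι, Y, e, rfl⟩ := S.exists_eq_ofArrows
  have hY : ∀ i, P (Y i) := fun i => hSP (Presieve.ofArrows.mk i)
  obtain ⟨s, -, huniq⟩ := hF ι A hA Y hY e hS (fun i => F.map (homOf (hY i) hA (e i)).op a)
    fun i j W hW g₁ g₂ hcomm => by rw [← map_homOf_comp, ← map_homOf_comp, hcomm]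
  exact (huniq a fun _ => rfl).trans
    (huniq b fun i => (hab _ _ _ (Presieve.ofArrows.mk i)).symm).symm

lemma IsSheafOnBase.isSquareCompatible (hF : IsSheafOnBase F K)
    (hbase : ∀ X : C, ∃ S ∈ K.coverings X, ∀ ⦃Y : C⦄ ⦃f : Y ⟶ X⦄, S f → P Y)
    {ι : Type*} {A : C} {X : ι → C} (hX : ∀ i, P (X i)) (f : ∀ i, X i ⟶ A)
    {κ : ι → ι → Type*} {Z : ∀ i j, κ i j → C} (hZ : ∀ i j k, P (Z i j k))
    (g : ∀ (i j) (k : κ i j), Z i j k ⟶ pullback (f i) (f j))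
    (hg : ∀ i j, Presieve.ofArrows (Z i j) (g i j) ∈ K.coverings (pullback (f i) (f j)))
    (x : ∀ i, F.obj (op ⟨X i, hX i⟩))
    (hx : ∀ (i j) (k : κ i j),
      F.map (homOf (hZ i j k) (hX i) (g i j k ≫ pullback.fst (f i) (f j))).op (x i) =
        F.map (homOf (hZ i j k) (hX j) (g i j k ≫ pullback.snd (f i) (f j))).op (x j)) :
    IsSquareCompatible F hX f x := by
  intro i j W hW g₁ g₂ hcomm
  obtain ⟨R, hR, hRP⟩ := Pretopology.exists_mem_coverings_of_base_factoring hbase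
    (pullback.lift g₁ g₂ hcomm) (hg i j)
  refine hF.ext hW hR (fun V e he => (hRP he).1) fun V hV e he => ?_
  obtain ⟨-, _, _, t, ⟨k⟩, hfac⟩ := hRP he
  have h₁ : e ≫ g₁ = t ≫ g i j k ≫ pullback.fst (f i) (f j) := by
    rw [← Category.assoc, hfac, Category.assoc, pullback.lift_fst]
  have h₂ : e ≫ g₂ = t ≫ g i j k ≫ pullback.snd (f i) (f j) := by
    rw [← Category.assoc, hfac, Category.assoc, pullback.lift_snd]
  rw [← map_homOf_comp, ← map_homOf_comp, h₁, h₂, map_homOf_comp F hV (hZ i j k),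
    map_homOf_comp F hV (hZ i j k), hx]

end FullSubcategory

/-- **Part (2) of the Comparison Lemma.**
Let `C` be a category with pullbacks, `K` a Grothendieck pretopology on `C`, and `P` a
predicate on objects of `C` whose full subcategory `B` is a base for `(C, K)`.  A presheaf
`F` on `B` is a sheaf for the restricted coverage `K|_B` (every compatible family for a
covering family of `K|_B` has a unique amalgamation, compatibility being measured on all
commutative squares in `B`) if and only if for every covering family `{Aᵢ → A}` in `K|_B`
and every choice of `K`-covering families `{A_{ijk} → Aᵢ ×_A Aⱼ}` with sources in `B`, the
diagram `F(A) → Π F(Aᵢ) ⇉ Π F(A_{ijk})` is an equalizer. -/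
theorem sheaf_on_base_iff_equalizer
    {C : Type u} [Category.{v} C] [HasPullbacks C]
    (K : Pretopology C) (P : C → Prop)
    (hbase : ∀ X : C, ∃ S ∈ K.coverings X, ∀ ⦃Y : C⦄ ⦃f : Y ⟶ X⦄, S f → P Y)
    (F : (CategoryTheory.ObjectProperty.FullSubcategory P)ᵒᵖ ⥤ Type w) :
    -- `F` is a sheaf on `(B, K|_B)`:
    (∀ (ι : Type (max u v)) (A : C) (hA : P A) (X : ι → C) (hX : ∀ i, P (X i))
        (f : ∀ i, X i ⟶ A), Presieve.ofArrows X f ∈ K.coverings A →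
      ∀ x : ∀ i, F.obj (op ⟨X i, hX i⟩),
        (∀ (i j : ι) (W : C) (hW : P W) (g₁ : W ⟶ X i) (g₂ : W ⟶ X j),
          g₁ ≫ f i = g₂ ≫ f j →
            F.map (FullSubcategory.homOf hW (hX i) g₁).op (x i) =
              F.map (FullSubcategory.homOf hW (hX j) g₂).op (x j)) →
        ∃! s : F.obj (op ⟨A, hA⟩),
          ∀ i, F.map (FullSubcategory.homOf (hX i) hA (f i)).op s = x i)
    ↔
    -- the equalizer condition for all refinements of the pullbacks by objects of `B`:
    (∀ (ι : Type (max u v)) (A : C) (hA : P A) (X : ι → C) (hX : ∀ i, P (X i))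
        (f : ∀ i, X i ⟶ A), Presieve.ofArrows X f ∈ K.coverings A →
      ∀ (κ : ι → ι → Type (max u v)) (Z : ∀ i j, κ i j → C)
        (hZ : ∀ i j k, P (Z i j k))
        (g : ∀ (i j) (k : κ i j), Z i j k ⟶ pullback (f i) (f j)),
        (∀ i j, Presieve.ofArrows (Z i j) (g i j) ∈ K.coverings (pullback (f i) (f j))) →
      ∀ x : ∀ i, F.obj (op ⟨X i, hX i⟩),
        (∀ (i j) (k : κ i j),
          F.map (FullSubcategory.homOf (hZ i j k) (hX i)
              (g i j k ≫ pullback.fst (f i) (f j))).op (x i) =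
            F.map (FullSubcategory.homOf (hZ i j k) (hX j)
              (g i j k ≫ pullback.snd (f i) (f j))).op (x j)) →
        ∃! s : F.obj (op ⟨A, hA⟩),
          ∀ i, F.map (FullSubcategory.homOf (hX i) hA (f i)).op s = x i) := by
  constructor
  · intro hF ι A hA X hX f hf κ Z hZ g hg x hx
    exact hF ι A hA X hX f hf x
      (FullSubcategory.IsSheafOnBase.isSquareCompatible hF hbase hX f hZ g hg x hx)
  · intro hF ι A hA X hX f hf x hx
    choose κ Z g hg hZ using fun i j =>
      Pretopology.exists_ofArrows_mem_coverings_of_base (pullback (f i) (f j)) hbase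
    exact hF ι A hA X hX f hf κ Z hZ g hg x fun i j k =>
      hx i j _ _ _ _ (by simp only [Category.assoc, pullback.condition])
end

section
/- Let C be a category with pullbacks, K a Grothendieck pretopology on C, and B a full subcategory of C which is a base for (C, K); let K|_B be the induced coverage on B. Let A be an object of B and let S be a sieve on A in B (a collection of morphisms in B with target A that is closed under precomposition with arbitrary morphisms of B). Let (S) be the sieve on A in C consisting of all morphisms to A in C that factor through some morphism of S. Then S contains a covering family in K|_B if and only if (S) contains a covering family in K. -/
open CategoryTheory Limits

universe w v u

/-- The family of morphisms in `C` underlying a presieve on an object of the full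
subcategory of `C` determined by `P`. -/
def Presieve.inAmbient {C : Type u} [Category.{v} C] {P : C → Prop}
    {A : CategoryTheory.ObjectProperty.FullSubcategory P} (S : Presieve A) : Presieve A.obj :=
  fun Y f => ∃ hY : P Y, S (FullSubcategory.homOf hY A.property f)

/-!
Extending `S` to `C` and restricting back to `B` recovers `S`, because the inclusion of `B` is
fully faithful; so a `K|_B`-cover inside `S` is a `K`-cover inside `(S)`. Conversely, a
`K`-cover inside `(S)` is refined, by composing it with base covers of its sources, to a
`K`-cover all of whose sources lie in `B`; such a cover is its own restriction to `B`, and that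
restriction lies in `S`.
-/

namespace CategoryTheory

variable {C : Type u} [Category.{v} C]

lemma Presieve.bind_le_generate {X : C} (S : Presieve X)
    (R : ∀ ⦃Y⦄ ⦃f : Y ⟶ X⦄, S f → Presieve Y) : S.bind R ≤ (Sieve.generate S).arrows := by
  rintro Z _ ⟨Y, g, f, hf, -, rfl⟩
  exact ⟨Y, g, f, hf, rfl⟩

lemma Pretopology.exists_covering_le_generate_of_base [HasPullbacks C] (K : Pretopology C)
    {P : C → Prop} (hbase : ∀ X : C, ∃ S ∈ K.coverings X, ∀ ⦃Y : C⦄ ⦃f : Y ⟶ X⦄, S f → P Y)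
    {X : C} {T : Presieve X} (hT : T ∈ K.coverings X) :
    ∃ R ∈ K.coverings X, (∀ ⦃Y : C⦄ ⦃f : Y ⟶ X⦄, R f → P Y) ∧
      R ≤ (Sieve.generate T).arrows := by
  choose U hU hUP using hbase
  refine ⟨T.bind fun Y _ _ => U Y, K.transitive _ _ hT fun Y _ _ => hU Y, ?_,
    T.bind_le_generate _⟩
  rintro Y _ ⟨Z, g, -, -, hg, rfl⟩
  exact hUP Z hg

end CategoryTheory

section

variable {C : Type u} [Category.{v} C] {P : C → Prop} {A : ObjectProperty.FullSubcategory P}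

lemma Presieve.inAmbient_le_functorPushforward (T : Presieve A) :
    Presieve.inAmbient T ≤ T.functorPushforward (ObjectProperty.ι P) := by
  rintro Y f ⟨hY, hT⟩
  exact ⟨⟨Y, hY⟩, _, 𝟙 Y, hT, (Category.id_comp f).symm⟩

lemma Presieve.inAmbient_functorPullback {R : Presieve A.obj}
    (hR : ∀ ⦃Y : C⦄ ⦃f : Y ⟶ A.obj⦄, R f → P Y) :
    Presieve.inAmbient (R.functorPullback (ObjectProperty.ι P)) = R := by
  funext Y f
  exact propext ⟨fun ⟨_, h⟩ => h, fun h => ⟨hR h, h⟩⟩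

end

/-- **The sieve-translation step in the proof of part (3) of the Comparison Lemma.**
Let `C` be a category with pullbacks, `K` a Grothendieck pretopology on `C`, and `P` a
predicate on objects of `C` whose full subcategory `B` is a base for `(C, K)`.  Let `A` be
an object of `B` and `S` a sieve on `A` in `B`.  Then `S` contains a covering family of the
restricted coverage `K|_B` if and only if the sieve `(S)` on `A` in `C`, consisting of all
morphisms to `A` factoring through a morphism of `S`, contains a `K`-covering family. -/
theorem sieve_contains_cover_iff_extension_contains_cover
    {C : Type u} [Category.{v} C] [HasPullbacks C]
    (K : Pretopology C) (P : C → Prop)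
    (hbase : ∀ X : C, ∃ S ∈ K.coverings X, ∀ ⦃Y : C⦄ ⦃f : Y ⟶ X⦄, S f → P Y)
    (A : CategoryTheory.ObjectProperty.FullSubcategory P) (S : Sieve A) :
    (∃ T : Presieve A, Presieve.inAmbient T ∈ K.coverings A.obj ∧
      ∀ ⦃Y : CategoryTheory.ObjectProperty.FullSubcategory P⦄ ⦃f : Y ⟶ A⦄, T f → S f) ↔
    (∃ T' : Presieve A.obj, T' ∈ K.coverings A.obj ∧
      ∀ ⦃Y : C⦄ ⦃f : Y ⟶ A.obj⦄, T' f →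
        ∃ (Z : CategoryTheory.ObjectProperty.FullSubcategory P) (g : Z ⟶ A) (h : Y ⟶ Z.obj),
          S g ∧ f = h ≫ (ObjectProperty.ι P).map g) := by
  -- The condition on `T'` unfolds to `T' ≤ (S.functorPushforward (ObjectProperty.ι P)).arrows`.
  constructor
  · rintro ⟨T, hT, hTS⟩
    exact ⟨_, hT, (Presieve.inAmbient_le_functorPushforward T).trans
      (Presieve.functorPushforward_monotone hTS)⟩
  · rintro ⟨T', hT', hT'S⟩
    obtain ⟨R, hR, hRP, hRT'⟩ := K.exists_covering_le_generate_of_base hbase hT'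
    have hRS : R ≤ (S.functorPushforward (ObjectProperty.ι P)).arrows :=
      hRT'.trans ((Sieve.generate_le_iff _ _).2 hT'S)
    refine ⟨R.functorPullback (ObjectProperty.ι P),
      (Presieve.inAmbient_functorPullback hRP).symm ▸ hR, fun Y f hf => ?_⟩
    rw [← Sieve.functorPullback_functorPushforward_eq (F := ObjectProperty.ι P) (S := S)]
    exact hRS _ _ hf
end

section
/- Let G = (V, E) be a finite connected simple graph. Let ~ be the smallest equivalence relation on the edge set E such that e ~ e′ whenever there exists a cycle of G containing both edges e and e′ (the equivalence classes of ~ are the maximal circuit-connected subsets of E). Then Σ_{C ∈ E/~} (|C| − 1) = |E| + |V| − Σ_{v ∈ V} c(G − v) − 1, where for each vertex v, c(G − v) denotes the number of connected components of the graph obtained from G by deleting v and all edges incident to v. -/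
/-- Two edges of a simple graph lie on a common cycle. -/
def SimpleGraph.OnCommonCycle {V : Type*} (G : SimpleGraph V) (e e' : G.edgeSet) : Prop :=
  ∃ (v : V) (c : G.Walk v v), c.IsCycle ∧ (e : Sym2 V) ∈ c.edges ∧ (e' : Sym2 V) ∈ c.edges

/-!
Let `B` be the bipartite graph on `V ⊕ E/~` joining a vertex `v` to each circuit class having an
edge at `v`. Two neighbours `x, y` of `v` are connected in `G − v` iff the edges `vx, vy` lie on a
common cycle (close a path `x → y` avoiding `v` through `v`); conversely, vertices other than `v`
of circuit-equivalent edges stay connected in `G − v`, since a cycle minus one vertex is connected.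
Hence the components of `G − v` correspond to the classes at `v`, and `Σ_v c(G − v)` is the number
of edges of `B`. The graph `B` is a tree: it is connected because `G` is, and each edge `v — C` is a
bridge, because a path from another class `C'` back to `C` avoiding `v` would connect neighbours
of `v` in `G − v` and force `C' = C`. So `B` has `|V| + |E/~| − 1` edges, while
`Σ_C (|C| − 1) = |E| − |E/~|`.
-/

open Relation

theorem Setoid.finsum_mem_classes_ncard_sub_one {α : Type*} [Finite α] (r : Setoid α) :
    ∑ᶠ c ∈ r.classes, ((c.ncard : ℤ) - 1) = Nat.card α - Nat.card (Quotient r) := by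
  have hfin : r.classes.Finite := Set.toFinite _
  have hunion : ∑ᶠ c ∈ r.classes, c.ncard = Nat.card α := by
    have := hfin.ncard_biUnion (s := id) (fun _ _ ↦ Set.toFinite _)
      r.isPartition_classes.pairwiseDisjoint
    simpa [← Set.sUnion_eq_biUnion] using this.symm
  have hone : ∑ᶠ c ∈ r.classes, (1 : ℤ) = r.classes.ncard := by
    rw [← finsum_one, Nat.cast_finsum_mem hfin, Nat.cast_one]
  rw [finsum_mem_sub_distrib _ _ hfin, ← Nat.cast_finsum_mem hfin, hunion, hone,
    Nat.card_congr r.quotientEquivClasses, Nat.card_coe_set_eq]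

theorem Nat.card_eq_of_surjective_of_ker_eq {α β γ : Type*} {f : α → β} {g : α → γ}
    (hf : Function.Surjective f) (hg : Function.Surjective g)
    (hfg : ∀ a b, f a = f b ↔ g a = g b) : Nat.card β = Nat.card γ :=
  Nat.card_congr <| (Setoid.quotientKerEquivOfSurjective f hf).symm.trans <|
    (Quotient.congrRight hfg).trans (Setoid.quotientKerEquivOfSurjective g hg)

namespace SimpleGraph

def incidenceGraph {α β : Type*} (r : α → β → Prop) : SimpleGraph (α ⊕ β) where
  Adj
    | .inl a, .inr b => r a b
    | .inr b, .inl a => r a b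
    | _, _ => False
  symm := ⟨by rintro (a | b) (a | b) h <;> exact h⟩
  loopless := ⟨by rintro (a | b) h <;> exact h⟩

section incidenceGraph
variable {α β : Type*} {r : α → β → Prop}

@[simp] lemma incidenceGraph_adj_inl_inr {a : α} {b : β} :
    (incidenceGraph r).Adj (.inl a) (.inr b) ↔ r a b := .rfl
@[simp] lemma incidenceGraph_adj_inr_inl {a : α} {b : β} :
    (incidenceGraph r).Adj (.inr b) (.inl a) ↔ r a b := .rfl

lemma card_edgeSet_incidenceGraph_eq_card_rel :
    Nat.card (incidenceGraph r).edgeSet = Nat.card {p : α × β // r p.1 p.2} := by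
  refine (Nat.card_eq_of_bijective (fun p ↦ ⟨s(.inl p.1.1, .inr p.1.2), p.2⟩) ⟨?_, ?_⟩).symm
  · rintro ⟨⟨a, b⟩, _⟩ ⟨⟨a', b'⟩, _⟩ h
    simp_all [Subtype.ext_iff]
  · rintro ⟨e, he⟩
    induction e using Sym2.ind with
    | _ x y =>
      rcases x with a | b <;> rcases y with a' | b'
      · exact he.elim
      · exact ⟨⟨(a, b'), he⟩, rfl⟩
      · exact ⟨⟨(a', b), he⟩, Subtype.ext Sym2.eq_swap⟩
      · exact he.elim

lemma card_edgeSet_incidenceGraph [Fintype α] [Finite β] :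
    Nat.card (incidenceGraph r).edgeSet = ∑ a, Nat.card {b // r a b} := by
  rw [card_edgeSet_incidenceGraph_eq_card_rel,
    Nat.card_congr (Equiv.subtypeProdEquivSigmaSubtype r), Nat.card_sigma]

end incidenceGraph

variable {V : Type*} {G : SimpleGraph V}

lemma Walk.reachable_induce_of_support_subset {s : Set V} {x : s} {w : V} (p : G.Walk x w)
    (hp : ∀ z ∈ p.support, z ∈ s) {y : s} (hy : ↑y ∈ p.support) : (G.induce s).Reachable x y := by
  classical
  exact ⟨(p.takeUntil y hy).induce s fun z hz ↦ hp z (p.support_takeUntil_subset_support _ hz)⟩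

lemma Walk.IsPath.reachable_induce_compl_singleton {u v : V} {p : G.Walk u v} (hp : p.IsPath)
    (hu : u ≠ v) {y : ({v}ᶜ : Set V)} (hy : ↑y ∈ p.support) :
    (G.induce {v}ᶜ).Reachable ⟨u, hu⟩ y := by
  classical
  exact ⟨(p.takeUntil y hy).induce ({v}ᶜ : Set V) fun z hz (hzv : z = v) ↦
    Walk.endpoint_notMem_support_takeUntil hp hy (Ne.symm y.2) (hzv ▸ hz)⟩

lemma Walk.IsCycle.reachable_induce_compl_singleton {w v : V} {c : G.Walk w w}
    (hc : c.IsCycle) {x y : ({v}ᶜ : Set V)} (hx : ↑x ∈ c.support) (hy : ↑y ∈ c.support) :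
    (G.induce {v}ᶜ).Reachable x y := by
  classical
  by_cases hv : v ∈ c.support
  · have hrot := hc.rotate hv
    rw [← c.mem_support_rotate_iff v hv] at hx hy
    generalize c.rotate v hv = c' at hrot hx hy
    cases c' with
    | nil => exact absurd hrot.not_nil (by simp)
    | cons h p =>
      have hp := ((Walk.cons_isCycle_iff p h).mp hrot).1
      rw [Walk.support_cons, List.mem_cons] at hx hy
      exact (hp.reachable_induce_compl_singleton h.ne' (hx.resolve_left x.2)).symm.trans
        (hp.reachable_induce_compl_singleton h.ne' (hy.resolve_left y.2))
  · have hw : w ≠ v := fun h ↦ hv (h ▸ c.start_mem_support)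
    have hsub : ∀ z ∈ c.support, z ∈ ({v}ᶜ : Set V) := fun z hz hzv ↦ hv (hzv ▸ hz)
    exact (c.reachable_induce_of_support_subset (x := ⟨w, hw⟩) hsub hx).symm.trans
      (c.reachable_induce_of_support_subset (x := ⟨w, hw⟩) hsub hy)

lemma exists_ne_mem_edge (e : G.edgeSet) (v : V) :
    ∃ z : ({v}ᶜ : Set V), ↑z ∈ (e : Sym2 V) := by
  obtain ⟨e, he⟩ := e
  induction e using Sym2.ind with
  | _ a b =>
    by_cases ha : a = v
    · exact ⟨⟨b, fun hb ↦ G.ne_of_adj he (ha.trans hb.symm)⟩, Sym2.mem_mk_right a b⟩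
    · exact ⟨⟨a, ha⟩, Sym2.mem_mk_left a b⟩

lemma reachable_induce_compl_singleton_of_eqvGen {v : V} {e e' : G.edgeSet}
    (h : EqvGen G.OnCommonCycle e e') {x y : ({v}ᶜ : Set V)} (hx : ↑x ∈ (e : Sym2 V))
    (hy : ↑y ∈ (e' : Sym2 V)) : (G.induce {v}ᶜ).Reachable x y := by
  induction h generalizing x y with
  | rel e e' h =>
    obtain ⟨w, c, hc, he, he'⟩ := h
    exact hc.reachable_induce_compl_singleton (Walk.mem_support_of_mem_edges he hx)
      (Walk.mem_support_of_mem_edges he' hy)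
  | refl e =>
    by_cases hxy : x = y
    · rw [hxy]
    · have he : (e : Sym2 V) = s(↑x, ↑y) :=
        (Sym2.mem_and_mem_iff (Subtype.coe_injective.ne hxy)).mp ⟨hx, hy⟩
      exact Adj.reachable (induce_adj.mpr (G.mem_edgeSet.mp (he ▸ e.2)))
  | symm e e' _ ih => exact (ih hy hx).symm
  | trans e₁ e₂ e₃ _ _ ih₁ ih₂ =>
    obtain ⟨z, hz⟩ := exists_ne_mem_edge e₂ v
    exact (ih₁ hx hz).trans (ih₂ hz hy)

lemma eqvGen_of_reachable_induce_compl_singleton {v x y : V} (hx : G.Adj v x) (hy : G.Adj v y)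
    (h : (G.induce {v}ᶜ).Reachable ⟨x, hx.ne'⟩ ⟨y, hy.ne'⟩) :
    EqvGen G.OnCommonCycle ⟨s(v, x), hx⟩ ⟨s(v, y), hy⟩ := by
  classical
  by_cases hxy : x = y
  · subst hxy
    exact EqvGen.refl _
  obtain ⟨p⟩ := h
  let P : G.Walk x y := p.toPath.1.map (Embedding.induce _).toHom
  have hP : P.IsPath := p.toPath.2.map (Embedding.induce (G := G) _).injective
  have hvP : v ∉ P.support := by
    rw [show P.support = _ from Walk.support_map _ _, List.mem_map]
    rintro ⟨z, -, hz⟩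
    exact z.2 hz
  have hc : (Walk.cons hx (P.concat hy.symm)).IsCycle := by
    refine (Walk.cons_isCycle_iff _ hx).mpr ⟨hP.concat hvP hy.symm, ?_⟩
    simp only [Walk.edges_concat, List.concat_eq_append, List.mem_append, List.mem_singleton,
      not_or, Sym2.eq_iff]
    exact ⟨fun h ↦ hvP (P.fst_mem_support_of_mem_edges h), fun h ↦ hy.ne h.1, by simpa⟩
  exact EqvGen.rel _ _ ⟨v, _, hc, by simp, by simp [Walk.edges_concat]⟩

abbrev circuitSetoid (G : SimpleGraph V) : Setoid G.edgeSet := EqvGen.setoid G.OnCommonCycle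

abbrev CircuitClass (G : SimpleGraph V) : Type _ := Quotient G.circuitSetoid

def CircuitClass.verts (C : G.CircuitClass) : Set V :=
  {v | ∃ e : G.edgeSet, Quotient.mk _ e = C ∧ v ∈ (e : Sym2 V)}

lemma CircuitClass.exists_adj_of_mem_verts {C : G.CircuitClass} {v : V} (hv : v ∈ C.verts) :
    ∃ x, ∃ h : G.Adj v x, Quotient.mk G.circuitSetoid ⟨s(v, x), h⟩ = C := by
  obtain ⟨⟨e, he⟩, rfl, hve⟩ := hv
  induction e using Sym2.ind with
  | _ a b =>
    rcases Sym2.mem_iff.mp hve with rfl | rfl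
    · exact ⟨b, he, rfl⟩
    · exact ⟨a, he.symm, by simp only [Sym2.eq_swap]⟩

lemma CircuitClass.reachable_induce_compl_singleton {C : G.CircuitClass} {v : V}
    {x y : ({v}ᶜ : Set V)} (hx : ↑x ∈ C.verts) (hy : ↑y ∈ C.verts) :
    (G.induce {v}ᶜ).Reachable x y := by
  obtain ⟨e, rfl, hxe⟩ := hx
  obtain ⟨e', he', hye⟩ := hy
  exact reachable_induce_compl_singleton_of_eqvGen (Quotient.exact he'.symm) hxe hye

lemma Connected.exists_adj_connectedComponentMk_eq (hG : G.Connected) {v : V}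
    (K : (G.induce {v}ᶜ).ConnectedComponent) :
    ∃ x, ∃ h : G.Adj v x, (G.induce {v}ᶜ).connectedComponentMk ⟨x, h.ne'⟩ = K := by
  obtain ⟨u, rfl⟩ := K.exists_rep
  obtain ⟨p⟩ := hG.preconnected u v
  let S : Set V := {z | ∃ hz : z ≠ v, (G.induce {v}ᶜ).Reachable u ⟨z, hz⟩}
  obtain ⟨d, -, ⟨_, hfst_reach⟩, hsnd⟩ := p.exists_boundary_dart S ⟨u.2, .rfl⟩ (by simp [S])
  have hsnd_eq : d.snd = v := by
    by_contra hne
    exact hsnd ⟨hne, hfst_reach.trans (Adj.reachable (induce_adj.mpr d.adj))⟩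
  refine ⟨d.fst, hsnd_eq ▸ d.adj.symm, ?_⟩
  exact ConnectedComponent.sound hfst_reach.symm

lemma Connected.card_connectedComponent_induce_compl_singleton (hG : G.Connected) (v : V) :
    Nat.card (G.induce {v}ᶜ).ConnectedComponent =
      Nat.card {C : G.CircuitClass // v ∈ C.verts} := by
  refine Nat.card_eq_of_surjective_of_ker_eq
    (f := fun x : {x // G.Adj v x} ↦ (G.induce {v}ᶜ).connectedComponentMk ⟨x, x.2.ne'⟩)
    (g := fun x ↦ ⟨Quotient.mk _ ⟨s(v, x), x.2⟩, _, rfl, Sym2.mem_mk_left _ _⟩) ?_ ?_ ?_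
  · intro K
    obtain ⟨x, hx, rfl⟩ := hG.exists_adj_connectedComponentMk_eq K
    exact ⟨⟨x, hx⟩, rfl⟩
  · rintro ⟨C, hv⟩
    obtain ⟨x, hx, rfl⟩ := CircuitClass.exists_adj_of_mem_verts hv
    exact ⟨⟨x, hx⟩, rfl⟩
  · rintro ⟨x, hx⟩ ⟨y, hy⟩
    refine ConnectedComponent.eq.trans ⟨fun h ↦ ?_, fun h ↦ ?_⟩
    · exact Subtype.ext (Quotient.sound (eqvGen_of_reachable_induce_compl_singleton hx hy h))
    · exact reachable_induce_compl_singleton_of_eqvGen (Quotient.exact (congrArg Subtype.val h))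
        (Sym2.mem_mk_right _ _) (Sym2.mem_mk_right _ _)

/-- For connected `G`, the block–cut tree, with every vertex (not only the cut vertices) as a
node. -/
abbrev blockGraph (G : SimpleGraph V) : SimpleGraph (V ⊕ G.CircuitClass) :=
  incidenceGraph fun v (C : G.CircuitClass) ↦ v ∈ C.verts

lemma Connected.blockGraph_connected (hG : G.Connected) : G.blockGraph.Connected := by
  have hstep {a c : V} (h : G.Adj a c) : G.blockGraph.Reachable (.inl a) (.inl c) :=
    (Adj.reachable (incidenceGraph_adj_inl_inr.mpr ⟨⟨s(a, c), h⟩, rfl, Sym2.mem_mk_left a c⟩)).trans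
      (Adj.reachable (incidenceGraph_adj_inr_inl.mpr ⟨_, rfl, Sym2.mem_mk_right a c⟩))
  have hinl (u w : V) : G.blockGraph.Reachable (.inl u) (.inl w) := by
    obtain ⟨p⟩ := hG.preconnected u w
    induction p with
    | nil => rfl
    | cons h _ ih => exact (hstep h).trans ih
  have hrep (a : V ⊕ G.CircuitClass) : ∃ u, G.blockGraph.Reachable (.inl u) a := by
    rcases a with u | C
    · exact ⟨u, .rfl⟩
    · obtain ⟨e, rfl⟩ := C.exists_rep
      exact ⟨_, Adj.reachable (incidenceGraph_adj_inl_inr.mpr ⟨e, rfl, Sym2.out_fst_mem _⟩)⟩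
  obtain ⟨u₀⟩ := hG.nonempty
  refine (connected_iff_exists_forall_reachable _).mpr ⟨.inl u₀, fun a ↦ ?_⟩
  obtain ⟨u, hu⟩ := hrep a
  exact (hinl u₀ u).trans hu

lemma blockGraph_walk_reachable_induce_compl_singleton {v : V} {a b : V ⊕ G.CircuitClass}
    (p : G.blockGraph.Walk a b) (hp : .inl v ∉ p.support) {x y : ({v}ᶜ : Set V)}
    (hx : ↑x ∈ Sum.elim (fun w ↦ {w}) CircuitClass.verts a)
    (hy : ↑y ∈ Sum.elim (fun w ↦ {w}) CircuitClass.verts b) :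
    (G.induce {v}ᶜ).Reachable x y := by
  induction p generalizing x with
  | @nil a =>
    rcases a with w | C
    · obtain rfl := Subtype.ext (hx.trans hy.symm)
      rfl
    · exact CircuitClass.reachable_induce_compl_singleton hx hy
  | @cons a t b h p ih =>
    rw [Walk.support_cons, List.mem_cons, not_or] at hp
    rcases a with w | C <;> rcases t with w' | C'
    · exact h.elim
    · exact ih hp.2 ((Set.mem_singleton_iff.mp hx) ▸ h) hy
    · have hw' : w' ≠ v := fun hw ↦ hp.2 (hw ▸ p.start_mem_support)
      exact (CircuitClass.reachable_induce_compl_singleton (y := ⟨w', hw'⟩) hx h).trans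
        (ih hp.2 rfl hy)
    · exact h.elim

lemma blockGraph_isBridge {v : V} {C : G.CircuitClass} (hv : v ∈ C.verts) :
    G.blockGraph.IsBridge s(.inl v, .inr C) := by
  classical
  rintro ⟨p⟩
  obtain ⟨p, hp⟩ := p.toPath
  cases p with
  | @cons _ t _ h q =>
    obtain ⟨h, hne⟩ := deleteEdges_adj.mp h
    rcases t with w | C'
    · exact h.elim
    · have hvq : .inl v ∉ (q.mapLe (deleteEdges_le _)).support := by
        rw [Walk.support_mapLe_eq_support]
        exact ((Walk.cons_isPath_iff _ _).mp hp).2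
      obtain ⟨x, hx, rfl⟩ := CircuitClass.exists_adj_of_mem_verts h
      obtain ⟨y, hy, rfl⟩ := CircuitClass.exists_adj_of_mem_verts hv
      have hreach := blockGraph_walk_reachable_induce_compl_singleton (x := ⟨x, hx.ne'⟩)
        (y := ⟨y, hy.ne'⟩) _ hvq ⟨_, rfl, Sym2.mem_mk_right v x⟩ ⟨_, rfl, Sym2.mem_mk_right v y⟩
      have hC : Quotient.mk G.circuitSetoid ⟨s(v, x), hx⟩ = Quotient.mk _ ⟨s(v, y), hy⟩ :=
        Quotient.sound (eqvGen_of_reachable_induce_compl_singleton hx hy hreach)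
      exact hne (by rw [hC]; rfl)

lemma blockGraph_isAcyclic : G.blockGraph.IsAcyclic := by
  refine isAcyclic_iff_forall_adj_isBridge.mpr ?_
  rintro (v | C) (w | D) h
  · exact h.elim
  · exact blockGraph_isBridge h
  · rw [Sym2.eq_swap]
    exact blockGraph_isBridge h
  · exact h.elim

lemma Connected.card_edgeSet_blockGraph_add_one [Finite V] (hG : G.Connected) :
    Nat.card G.blockGraph.edgeSet + 1 = Nat.card V + Nat.card G.CircuitClass := by
  rw [(isTree_iff_connected_and_card.mp ⟨hG.blockGraph_connected, blockGraph_isAcyclic⟩).2,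
    Nat.card_sum]

end SimpleGraph

theorem sum_card_circuit_classes_sub_one_general
    {V : Type*} [Fintype V] (G : SimpleGraph V) (hG : G.Connected) :
    ∑ᶠ c ∈ Setoid.classes (Relation.EqvGen.setoid G.OnCommonCycle),
        ((c.ncard : ℤ) - 1)
      = (Nat.card G.edgeSet : ℤ) + (Fintype.card V : ℤ)
        - (∑ v : V, (Nat.card (G.induce ({v}ᶜ : Set V)).ConnectedComponent : ℤ)) - 1 := by
  have hcomponents : ∑ v : V, Nat.card (G.induce ({v}ᶜ : Set V)).ConnectedComponent =
      Nat.card G.blockGraph.edgeSet := by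
    simp only [hG.card_connectedComponent_induce_compl_singleton,
      SimpleGraph.card_edgeSet_incidenceGraph]
  have htree : Nat.card G.blockGraph.edgeSet + 1 =
      Nat.card V + Nat.card (Quotient (Relation.EqvGen.setoid G.OnCommonCycle)) :=
    hG.card_edgeSet_blockGraph_add_one
  rw [Setoid.finsum_mem_classes_ncard_sub_one, ← Nat.cast_sum, hcomponents,
    ← Nat.card_eq_fintype_card]
  omega

/-- **The combinatorial identity of Section 4 (loop-free case).**
Let `G` be a finite connected simple graph, and let `~` be the smallest equivalence relation
on the edge set identifying two edges lying on a common cycle (so its classes are the maximal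
circuit-connected subsets of the edge set).  Then
`Σ_{C ∈ E/~} (|C| − 1) = |E| + |V| − Σ_{v ∈ V} c(G − v) − 1`,
where `c(G − v)` is the number of connected components of `G` with the vertex `v` deleted. -/
theorem sum_card_circuit_classes_sub_one
    {V : Type*} [Fintype V] [DecidableEq V] (G : SimpleGraph V) (hG : G.Connected) :
    ∑ᶠ c ∈ Setoid.classes (Relation.EqvGen.setoid G.OnCommonCycle),
        ((c.ncard : ℤ) - 1)
      = (Nat.card G.edgeSet : ℤ) + (Fintype.card V : ℤ)
        - (∑ v : V, (Nat.card (G.induce ({v}ᶜ : Set V)).ConnectedComponent : ℤ)) - 1 :=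
  sum_card_circuit_classes_sub_one_general G hG
end
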